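/- For every γ > 0, every u ∈ E and every ū ∈ T_γ(u), one has φ_γ(ū) ≤ φ_γ(u) − ((1 − γL)/(2γ))‖u − ū‖²; that is, one forward–backward step decreases the forward–backward envelope by at least (γ(1 − γL)/2)‖r‖² where r = (u − ū)/γ. -/

import Mathlib

/-!
At a prox point `ū` of `u - γ∇ℓ(u)` the infimum defining the Moreau envelope is attained, so
`φ_γ(u) = ℓ(u) + ⟪∇ℓ(u), ū - u⟫ + (1/(2γ))‖ū - u‖² + g(ū)`, while testing the envelope at `ū`
with `w = ū` gives `φ_γ(ū) ≤ ℓ(ū) + g(ū)`. Both bounds carry the same summand `g(ū)`, so only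
their real parts need comparing, and that comparison is the descent lemma
`ℓ(ū) ≤ ℓ(u) + ⟪∇ℓ(u), ū - u⟫ + (L/2)‖ū - u‖²`.
-/

open scoped RealInnerProductSpace
open Filter Topology Asymptotics

/-- Moreau envelope `g^γ(v) = inf_w { g(w) + (1/(2γ))‖w − v‖² }` of an
extended-real-valued function `g`. -/
noncomputable def moreauEnv {E : Type*} [NormedAddCommGroup E] [InnerProductSpace ℝ E]
    (g : E → EReal) (γ : ℝ) (v : E) : EReal :=
  ⨅ w : E, g w + (((1 / (2 * γ)) * ‖w - v‖ ^ 2 : ℝ) : EReal)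

/-- The (set-valued) proximal mapping
`prox_{γg}(v) = argmin_w { g(w) + (1/(2γ))‖w − v‖² }`. -/
def proxSet {E : Type*} [NormedAddCommGroup E] [InnerProductSpace ℝ E]
    (g : E → EReal) (γ : ℝ) (v : E) : Set E :=
  {w | ∀ w' : E, g w + (((1 / (2 * γ)) * ‖w - v‖ ^ 2 : ℝ) : EReal)
      ≤ g w' + (((1 / (2 * γ)) * ‖w' - v‖ ^ 2 : ℝ) : EReal)}

/-- The forward–backward envelope
`φ_γ(u) = ℓ(u) − (γ/2)‖∇ℓ(u)‖² + g^γ(u − γ∇ℓ(u))`, where `l'` plays the role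
of the gradient `∇ℓ`. -/
noncomputable def fbe {E : Type*} [NormedAddCommGroup E] [InnerProductSpace ℝ E]
    (l : E → ℝ) (l' : E → E) (g : E → EReal) (γ : ℝ) (u : E) : EReal :=
  ((l u - (γ / 2) * ‖l' u‖ ^ 2 : ℝ) : EReal) + moreauEnv g γ (u - γ • l' u)

theorem image_one_le_of_deriv_le_add_mul {f f' : ℝ → ℝ} {K : ℝ}
    (hf : ∀ t, HasDerivAt f (f' t) t) (hf' : ∀ t ∈ Set.Ico (0 : ℝ) 1, f' t ≤ f' 0 + K * t) :
    f 1 ≤ f 0 + f' 0 + K / 2 := by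
  have hB (t : ℝ) : HasDerivAt (fun t => f 0 + f' 0 * t + K / 2 * t ^ 2) (f' 0 + K * t) t := by
    have := (((hasDerivAt_id t).const_mul (f' 0)).const_add (f 0)).add
      ((hasDerivAt_pow 2 t).const_mul (K / 2))
    exact this.congr_deriv (by simp only [mul_one, Nat.cast_ofNat]; ring)
  have := image_le_of_deriv_right_le_deriv_boundary (a := 0) (b := 1)
    (fun t _ => (hf t).continuousAt.continuousWithinAt) (fun t _ => (hf t).hasDerivWithinAt)
    (B := fun t => f 0 + f' 0 * t + K / 2 * t ^ 2) (by simp)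
    (fun t _ => (hB t).continuousAt.continuousWithinAt) (fun t _ => (hB t).hasDerivWithinAt)
    hf' (x := 1) (by simp)
  simpa using this

section Gradient

variable {E : Type*} [NormedAddCommGroup E] [InnerProductSpace ℝ E] [CompleteSpace E]

theorem hasDerivAt_comp_add_smul {l : E → ℝ} {l' : E → E}
    (hgrad : ∀ x, HasGradientAt l (l' x) x) (u d : E) (t : ℝ) :
    HasDerivAt (fun t : ℝ => l (u + t • d)) ⟪l' (u + t • d), d⟫ t := by
  have hline : HasDerivAt (fun t : ℝ => u + t • d) d t := by
    simpa using ((hasDerivAt_id t).smul_const d).const_add u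
  exact (hgrad _).hasFDerivAt.comp_hasDerivAt t hline

theorem descent_lemma {l : E → ℝ} {l' : E → E} {L : ℝ}
    (hgrad : ∀ x, HasGradientAt l (l' x) x) (hlip : ∀ x y, ‖l' x - l' y‖ ≤ L * ‖x - y‖)
    (u d : E) : l (u + d) ≤ l u + ⟪l' u, d⟫ + L / 2 * ‖d‖ ^ 2 := by
  have bound (t : ℝ) (ht : t ∈ Set.Ico (0 : ℝ) 1) :
      ⟪l' (u + t • d), d⟫ ≤ ⟪l' u, d⟫ + L * ‖d‖ ^ 2 * t :=
    calc ⟪l' (u + t • d), d⟫ = ⟪l' u, d⟫ + ⟪l' (u + t • d) - l' u, d⟫ := by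
          rw [inner_sub_left]; ring
      _ ≤ ⟪l' u, d⟫ + L * ‖t • d‖ * ‖d‖ := by
          gcongr
          refine (real_inner_le_norm _ _).trans (mul_le_mul_of_nonneg_right ?_ (norm_nonneg d))
          simpa using hlip (u + t • d) u
      _ = ⟪l' u, d⟫ + L * ‖d‖ ^ 2 * t := by
          rw [norm_smul, Real.norm_of_nonneg ht.1]; ring
  have := image_one_le_of_deriv_le_add_mul (hasDerivAt_comp_add_smul hgrad u d)
    (by simpa only [zero_smul, add_zero] using bound)
  simp only [zero_smul, add_zero, one_smul] at this
  linarith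

end Gradient

section Envelope

variable {E : Type*} [NormedAddCommGroup E] [InnerProductSpace ℝ E]

theorem moreauEnv_le (g : E → EReal) (γ : ℝ) (v w : E) :
    moreauEnv g γ v ≤ g w + (((1 / (2 * γ)) * ‖w - v‖ ^ 2 : ℝ) : EReal) :=
  iInf_le _ w

theorem moreauEnv_eq_of_mem_proxSet {g : E → EReal} {γ : ℝ} {v w : E}
    (hw : w ∈ proxSet g γ v) :
    moreauEnv g γ v = g w + (((1 / (2 * γ)) * ‖w - v‖ ^ 2 : ℝ) : EReal) :=
  (moreauEnv_le g γ v w).antisymm (le_iInf hw)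

variable (l : E → ℝ) (l' : E → E) (g : E → EReal) {γ : ℝ}

theorem fbe_le (hγ : γ ≠ 0) (u : E) : fbe l l' g γ u ≤ (l u : EReal) + g u := by
  have hquad : (1 / (2 * γ)) * ‖u - (u - γ • l' u)‖ ^ 2 = (γ / 2) * ‖l' u‖ ^ 2 := by
    rw [sub_sub_cancel, norm_smul, mul_pow, Real.norm_eq_abs, sq_abs]
    field_simp
  calc fbe l l' g γ u
      ≤ ((l u - (γ / 2) * ‖l' u‖ ^ 2 : ℝ) : EReal)
          + (g u + (((1 / (2 * γ)) * ‖u - (u - γ • l' u)‖ ^ 2 : ℝ) : EReal)) :=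
        add_le_add_right (moreauEnv_le g γ _ u) _
    _ = (l u : EReal) + g u := by
        rw [hquad, add_comm (g u), ← add_assoc, ← EReal.coe_add, sub_add_cancel]

theorem fbe_eq_of_mem_proxSet (hγ : γ ≠ 0) {u ub : E}
    (hub : ub ∈ proxSet g γ (u - γ • l' u)) :
    fbe l l' g γ u = ((l u + ⟪l' u, ub - u⟫ + (1 / (2 * γ)) * ‖ub - u‖ ^ 2 : ℝ) : EReal) + g ub := by
  have hquad : (1 / (2 * γ)) * ‖ub - (u - γ • l' u)‖ ^ 2
      = (1 / (2 * γ)) * ‖ub - u‖ ^ 2 + ⟪l' u, ub - u⟫ + (γ / 2) * ‖l' u‖ ^ 2 := by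
    rw [sub_sub_eq_add_sub, add_sub_right_comm, norm_add_sq_real, real_inner_smul_right,
      norm_smul, mul_pow, Real.norm_eq_abs, sq_abs, real_inner_comm]
    field_simp
  rw [fbe, moreauEnv_eq_of_mem_proxSet hub, hquad, add_comm (g ub), ← add_assoc, ← EReal.coe_add]
  congr 2
  ring

end Envelope

theorem fbe_decrease_along_fb_step_general
    {E : Type*} [NormedAddCommGroup E] [InnerProductSpace ℝ E] [FiniteDimensional ℝ E]
    (l : E → ℝ) (l' : E → E) (g : E → EReal) (L γ : ℝ)
    (hγ : 0 < γ)
    (hgrad : ∀ x : E, HasGradientAt l (l' x) x)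
    (hlip : ∀ x y : E, ‖l' x - l' y‖ ≤ L * ‖x - y‖)
    (u ub : E) (hub : ub ∈ proxSet g γ (u - γ • l' u)) :
    fbe l l' g γ ub ≤
      fbe l l' g γ u - ((((1 - γ * L) / (2 * γ)) * ‖u - ub‖ ^ 2 : ℝ) : EReal) := by
  have hdescent : l ub ≤ l u + ⟪l' u, ub - u⟫ + (1 / (2 * γ)) * ‖ub - u‖ ^ 2
      - ((1 - γ * L) / (2 * γ)) * ‖u - ub‖ ^ 2 := by
    have key : (1 / (2 * γ)) * ‖ub - u‖ ^ 2 - ((1 - γ * L) / (2 * γ)) * ‖u - ub‖ ^ 2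
        = L / 2 * ‖ub - u‖ ^ 2 := by
      rw [norm_sub_rev u ub]; field_simp; ring
    have := descent_lemma hgrad hlip u (ub - u)
    rw [add_sub_cancel] at this
    linarith
  rw [fbe_eq_of_mem_proxSet l l' g hγ.ne' hub, sub_eq_add_neg, add_right_comm, ← EReal.coe_neg,
    ← EReal.coe_add, ← sub_eq_add_neg]
  exact (fbe_le l l' g hγ.ne' ub).trans (add_le_add_left (EReal.coe_le_coe_iff.mpr hdescent) _)

/-- one forward–backward step decreases the FBE:
`φ_γ(ū) ≤ φ_γ(u) − ((1 − γL)/(2γ))‖u − ū‖²` for `ū ∈ T_γ(u)`. -/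
theorem fbe_decrease_along_fb_step
    {E : Type*} [NormedAddCommGroup E] [InnerProductSpace ℝ E] [FiniteDimensional ℝ E]
    (l : E → ℝ) (l' : E → E) (g : E → EReal) (L γ : ℝ)
    (hL : 0 < L) (hγ : 0 < γ)
    (hgrad : ∀ x : E, HasGradientAt l (l' x) x)
    (hlip : ∀ x y : E, ‖l' x - l' y‖ ≤ L * ‖x - y‖)
    (hproper : ∃ x : E, g x ≠ ⊤) (hbot : ∀ x : E, g x ≠ ⊥)
    (hlsc : LowerSemicontinuous g)
    (hbdd : ∃ m : ℝ, ∀ x : E, (m : EReal) ≤ g x)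
    (u ub : E) (hub : ub ∈ proxSet g γ (u - γ • l' u)) :
    fbe l l' g γ ub ≤
      fbe l l' g γ u - ((((1 - γ * L) / (2 * γ)) * ‖u - ub‖ ^ 2 : ℝ) : EReal) :=
  fbe_decrease_along_fb_step_general l l' g L γ hγ hgrad hlip u ub hub
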